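/- arXiv:2506.08861 — 9 statements merged into one kernel-verified Lean document; each statement's English description precedes it below -/
import Mathlib

section
/- If the disturbance satisfies |d(t)| ≤ K₂ |e₂(t)| for all t ≥ 0, then along any solution of the closed-loop FBLC error dynamics the Lyapunov function V(t) = (1/2)(K₁ e₁(t)² + e₂(t)²) is non-increasing on [0, ∞), i.e., V(t) ≤ V(s) whenever 0 ≤ s ≤ t. -/
/-- Under the disturbance bound `|d t| ≤ K₂ |e₂ t|`, the Lyapunov
function `V t = (1/2)(K₁ e₁ t ^ 2 + e₂ t ^ 2)` is non-increasing on `[0, ∞)`. -/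
theorem fblc_lyapunov_nonincreasing
    (K₁ K₂ : ℝ) (hK₁ : 0 < K₁) (hK₂ : 0 < K₂)
    (e₁ e₂ d : ℝ → ℝ)
    (he₁ : Differentiable ℝ e₁) (he₂ : Differentiable ℝ e₂)
    (hd : Continuous d)
    (hdyn₁ : ∀ t : ℝ, 0 ≤ t → deriv e₁ t = e₂ t)
    (hdyn₂ : ∀ t : ℝ, 0 ≤ t → deriv e₂ t = -K₁ * e₁ t - K₂ * e₂ t - d t)
    (hbound : ∀ t : ℝ, 0 ≤ t → |d t| ≤ K₂ * |e₂ t|)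
    (V : ℝ → ℝ)
    (hV : ∀ t : ℝ, V t = (1/2) * (K₁ * (e₁ t)^2 + (e₂ t)^2)) :
    ∀ s t : ℝ, 0 ≤ s → s ≤ t → V t ≤ V s := by
  have hVf : V = fun t => (1/2) * (K₁ * (e₁ t)^2 + (e₂ t)^2) := funext hV
  have hdiff : Differentiable ℝ V := by
    rw [hVf]
    fun_prop
  have hderiv : ∀ t : ℝ, 0 ≤ t →
      deriv V t = -K₂ * (e₂ t)^2 - e₂ t * d t := by
    intro t ht
    have h1 : HasDerivAt (fun u => (e₁ u)^2) (2 * e₁ t * deriv e₁ t) t := by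
      simpa [mul_comm] using ((he₁ t).hasDerivAt.fun_pow 2)
    have h2 : HasDerivAt (fun u => (e₂ u)^2) (2 * e₂ t * deriv e₂ t) t := by
      simpa [mul_comm] using ((he₂ t).hasDerivAt.fun_pow 2)
    have h : HasDerivAt V ((1/2) * (K₁ * (2 * e₁ t * deriv e₁ t)
        + 2 * e₂ t * deriv e₂ t)) t := by
      rw [hVf]
      exact ((h1.const_mul K₁).add h2).const_mul (1/2)
    rw [h.deriv, hdyn₁ t ht, hdyn₂ t ht]
    ring
  have key : AntitoneOn V (Set.Ici 0) := by
    apply antitoneOn_of_deriv_nonpos (convex_Ici 0) hdiff.continuous.continuousOn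
      (hdiff.differentiableOn)
    intro t ht
    rw [interior_Ici] at ht
    have ht' : (0:ℝ) ≤ t := le_of_lt ht
    rw [hderiv t ht']
    have hb := hbound t ht'
    have h1 : -(e₂ t * d t) ≤ |e₂ t| * |d t| := by
      rw [← abs_mul]
      exact neg_le_abs _
    have h2 : |e₂ t| * |d t| ≤ |e₂ t| * (K₂ * |e₂ t|) :=
      mul_le_mul_of_nonneg_left hb (abs_nonneg _)
    have h3 : |e₂ t| * (K₂ * |e₂ t|) = K₂ * (e₂ t)^2 := by
      rw [mul_comm K₂, ← mul_assoc, abs_mul_abs_self]; ring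
    nlinarith [h1, h2, h3]
  intro s t hs hst
  exact key hs (le_trans hs hst) hst
end

section
/- If the disturbance satisfies |d(t)| ≤ K₂ |e₂(t)| for all t ≥ 0, then the origin of the closed-loop FBLC error dynamics is Lyapunov stable in the following quantitative sense: for every t ≥ 0, K₁ e₁(t)² + e₂(t)² ≤ K₁ e₁(0)² + e₂(0)²; in particular, e₁(t)² + e₂(t)² ≤ (max(K₁,1)/min(K₁,1)) · (e₁(0)² + e₂(0)²). -/
/-- Under the disturbance bound `|d t| ≤ K₂ |e₂ t|`, the origin of the
closed-loop FBLC error dynamics is Lyapunov stable in a quantitative sense. -/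
theorem fblc_lyapunov_stability
    (K₁ K₂ : ℝ) (hK₁ : 0 < K₁) (hK₂ : 0 < K₂)
    (e₁ e₂ d : ℝ → ℝ)
    (he₁ : Differentiable ℝ e₁) (he₂ : Differentiable ℝ e₂)
    (hd : Continuous d)
    (hdyn₁ : ∀ t : ℝ, 0 ≤ t → deriv e₁ t = e₂ t)
    (hdyn₂ : ∀ t : ℝ, 0 ≤ t → deriv e₂ t = -K₁ * e₁ t - K₂ * e₂ t - d t)
    (hbound : ∀ t : ℝ, 0 ≤ t → |d t| ≤ K₂ * |e₂ t|) :
    ∀ t : ℝ, 0 ≤ t →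
      K₁ * (e₁ t)^2 + (e₂ t)^2 ≤ K₁ * (e₁ 0)^2 + (e₂ 0)^2 ∧
      (e₁ t)^2 + (e₂ t)^2 ≤ (max K₁ 1 / min K₁ 1) * ((e₁ 0)^2 + (e₂ 0)^2) := by
  set V : ℝ → ℝ := fun t => K₁ * (e₁ t)^2 + (e₂ t)^2 with hV
  have hVdiff : Differentiable ℝ V := by
    apply Differentiable.add
    · exact (he₁.pow 2).const_mul K₁
    · exact he₂.pow 2
  have hderiv : ∀ t : ℝ, 0 ≤ t → deriv V t ≤ 0 := by
    intro t ht
    have h1 : deriv V t = K₁ * (2 * e₁ t * deriv e₁ t) + 2 * e₂ t * deriv e₂ t := by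
      rw [hV]
      rw [deriv_fun_add (by fun_prop : DifferentiableAt ℝ (fun y => K₁ * e₁ y ^ 2) t)
          (by fun_prop : DifferentiableAt ℝ (fun y => e₂ y ^ 2) t),
        deriv_const_mul K₁ (by fun_prop : DifferentiableAt ℝ (fun y => e₁ y ^ 2) t)]
      rw [deriv_fun_pow (he₁ t) 2, deriv_fun_pow (he₂ t) 2]
      ring
    rw [h1, hdyn₁ t ht, hdyn₂ t ht]
    have hb := hbound t ht
    have h2 : -(2 * e₂ t * d t) ≤ 2 * K₂ * (e₂ t)^2 := by
      have : |2 * e₂ t * d t| ≤ 2 * K₂ * (e₂ t)^2 := by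
        rw [abs_mul, abs_mul, abs_two]
        calc 2 * |e₂ t| * |d t| ≤ 2 * |e₂ t| * (K₂ * |e₂ t|) := by
              apply mul_le_mul_of_nonneg_left hb; positivity
          _ = 2 * K₂ * (e₂ t)^2 := by rw [← sq_abs (e₂ t)]; ring
      linarith [neg_abs_le (2 * e₂ t * d t)]
    nlinarith [sq_nonneg (e₂ t), hK₂]
  have hanti : AntitoneOn V (Set.Ici (0:ℝ)) := by
    apply antitoneOn_of_deriv_nonpos (convex_Ici 0) hVdiff.continuous.continuousOn
      (fun x _ => (hVdiff x).differentiableWithinAt)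
    intro x hx
    rw [interior_Ici] at hx
    exact hderiv x (le_of_lt hx)
  intro t ht
  have h1 : V t ≤ V 0 := hanti (Set.self_mem_Ici) ht ht
  constructor
  · exact h1
  · have hm : 0 < min K₁ 1 := lt_min hK₁ one_pos
    have hlow : min K₁ 1 * ((e₁ t)^2 + (e₂ t)^2) ≤ V t := by
      have h1' : min K₁ 1 ≤ K₁ := min_le_left _ _
      have h2' : min K₁ 1 ≤ 1 := min_le_right _ _
      have := sq_nonneg (e₁ t); have := sq_nonneg (e₂ t)
      simp only [hV]; nlinarith
    have hhigh : V 0 ≤ max K₁ 1 * ((e₁ 0)^2 + (e₂ 0)^2) := by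
      have h1' : K₁ ≤ max K₁ 1 := le_max_left _ _
      have h2' : (1:ℝ) ≤ max K₁ 1 := le_max_right _ _
      have := sq_nonneg (e₁ 0); have := sq_nonneg (e₂ 0)
      simp only [hV]; nlinarith
    rw [div_mul_eq_mul_div, le_div_iff₀ hm]
    calc ((e₁ t)^2 + (e₂ t)^2) * min K₁ 1 = min K₁ 1 * ((e₁ t)^2 + (e₂ t)^2) := by ring
      _ ≤ V t := hlow
      _ ≤ V 0 := h1
      _ ≤ max K₁ 1 * ((e₁ 0)^2 + (e₂ 0)^2) := hhigh
end

section
/- Suppose the disturbance satisfies the strict bound |d(t)| ≤ c |e₂(t)| for all t ≥ 0, where 0 ≤ c < K₂. Then every solution of the closed-loop FBLC error dynamics converges asymptotically to the origin: e₁(t) → 0 and e₂(t) → 0 as t → ∞. -/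
set_option maxHeartbeats 1000000


open Filter

/-- Under the strict disturbance bound `|d t| ≤ c |e₂ t|` with
`0 ≤ c < K₂`, every solution of the closed-loop FBLC error dynamics converges
asymptotically to the origin. -/
theorem fblc_asymptotic_stability
    (K₁ K₂ c : ℝ) (hK₁ : 0 < K₁) (hK₂ : 0 < K₂) (hc₀ : 0 ≤ c) (hc : c < K₂)
    (e₁ e₂ d : ℝ → ℝ)
    (he₁ : Differentiable ℝ e₁) (he₂ : Differentiable ℝ e₂)
    (hd : Continuous d)
    (hdyn₁ : ∀ t : ℝ, 0 ≤ t → deriv e₁ t = e₂ t)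
    (hdyn₂ : ∀ t : ℝ, 0 ≤ t → deriv e₂ t = -K₁ * e₁ t - K₂ * e₂ t - d t)
    (hbound : ∀ t : ℝ, 0 ≤ t → |d t| ≤ c * |e₂ t|) :
    Tendsto e₁ atTop (nhds 0) ∧ Tendsto e₂ atTop (nhds 0) := by
  set a : ℝ := K₂ - c with ha
  have ha0 : 0 < a := by simp only [ha]; linarith
  clear_value a
  -- choose a small ε for the cross term of the Lyapunov function
  obtain ⟨ε, hε0, hε1, hεK, hεa, hε4⟩ :
      ∃ ε : ℝ, 0 < ε ∧ ε ≤ 1 ∧ ε ≤ K₁ ∧ ε ≤ a ∧ ε * (K₂ + c) ^ 2 ≤ K₁ * a := by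
    refine ⟨min (min 1 K₁) (min a (K₁ * a / ((K₂ + c) ^ 2 + 1))), ?_, ?_, ?_, ?_, ?_⟩
    · have h1 : (0:ℝ) < K₁ * a / ((K₂ + c) ^ 2 + 1) := by positivity
      exact lt_min (lt_min one_pos hK₁) (lt_min ha0 h1)
    · exact le_trans (min_le_left _ _) (min_le_left _ _)
    · exact le_trans (min_le_left _ _) (min_le_right _ _)
    · exact le_trans (min_le_right _ _) (min_le_left _ _)
    · have h2 : min (min 1 K₁) (min a (K₁ * a / ((K₂ + c) ^ 2 + 1))) ≤
          K₁ * a / ((K₂ + c) ^ 2 + 1) := le_trans (min_le_right _ _) (min_le_right _ _)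
      have h3 : (0:ℝ) < (K₂ + c) ^ 2 + 1 := by positivity
      have h4 : K₁ * a / ((K₂ + c) ^ 2 + 1) * (K₂ + c) ^ 2 ≤ K₁ * a := by
        rw [div_mul_eq_mul_div, div_le_iff₀ h3]
        nlinarith [mul_pos hK₁ ha0, sq_nonneg (K₂ + c)]
      have h5 : (0:ℝ) ≤ (K₂ + c) ^ 2 := sq_nonneg _
      calc min (min 1 K₁) (min a (K₁ * a / ((K₂ + c) ^ 2 + 1))) * (K₂ + c) ^ 2
          ≤ K₁ * a / ((K₂ + c) ^ 2 + 1) * (K₂ + c) ^ 2 :=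
            mul_le_mul_of_nonneg_right h2 h5
        _ ≤ K₁ * a := h4
  set V : ℝ → ℝ := fun t => K₁ * e₁ t ^ 2 + e₂ t ^ 2 + ε * (e₁ t * e₂ t) with hV
  set β : ℝ := min (ε * K₁ / 2) (a / 2) with hβ
  have hβ0 : 0 < β := lt_min (by positivity) (by positivity)
  set M : ℝ := K₁ + 2 with hM
  have hM0 : 0 < M := by positivity
  set α : ℝ := β / M with hα
  have hα0 : 0 < α := div_pos hβ0 hM0
  -- derivative of V
  have hVd : ∀ t : ℝ, HasDerivAt V
      (K₁ * (2 * e₁ t * deriv e₁ t) + 2 * e₂ t * deriv e₂ t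
        + ε * (deriv e₁ t * e₂ t + e₁ t * deriv e₂ t)) t := by
    intro t
    have h1 := (he₁ t).hasDerivAt
    have h2 := (he₂ t).hasDerivAt
    have hp1 : HasDerivAt (fun t => e₁ t ^ 2) (2 * e₁ t * deriv e₁ t) t := by
      simpa using h1.fun_pow 2
    have hp2 : HasDerivAt (fun t => e₂ t ^ 2) (2 * e₂ t * deriv e₂ t) t := by
      simpa using h2.fun_pow 2
    exact ((hp1.const_mul K₁).add hp2).add ((h1.mul h2).const_mul ε)
  have hVdiff : Differentiable ℝ V := fun t => (hVd t).differentiableAt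
  -- the key derivative bound for t ≥ 0
  have hkey : ∀ t : ℝ, 0 ≤ t → deriv V t ≤ -α * V t := by
    intro t ht
    have hD : deriv V t = -2 * K₂ * e₂ t ^ 2 - 2 * e₂ t * d t + ε * e₂ t ^ 2
        - ε * K₁ * e₁ t ^ 2 - ε * K₂ * (e₁ t * e₂ t) - ε * (e₁ t * d t) := by
      rw [(hVd t).deriv, hdyn₁ t ht, hdyn₂ t ht]; ring
    set A := e₁ t with hA
    set B := e₂ t with hB
    clear_value A B
    have hb := hbound t ht
    rw [← hB] at hb
    have hAD : -(A * d t) ≤ c * (|A| * |B|) := by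
      have h1 : |A * d t| ≤ |A| * (c * |B|) := by
        rw [abs_mul]
        exact mul_le_mul_of_nonneg_left hb (abs_nonneg _)
      nlinarith [neg_abs_le (A * d t)]
    have hBD : -(B * d t) ≤ c * B ^ 2 := by
      have h1 : |B * d t| ≤ |B| * (c * |B|) := by
        rw [abs_mul]
        exact mul_le_mul_of_nonneg_left hb (abs_nonneg _)
      nlinarith [neg_abs_le (B * d t), sq_abs B]
    have hAB : -(A * B) ≤ |A| * |B| ∧ A * B ≤ |A| * |B| := by
      constructor <;> nlinarith [neg_abs_le (A * B), le_abs_self (A * B), abs_mul A B]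
    -- step 1: deriv V t ≤ -β (A² + B²)
    have hstep : deriv V t ≤ -β * (A ^ 2 + B ^ 2) := by
      rw [hD]
      have hsq : 0 ≤ ε * (K₁ * |A| - (K₂ + c) * |B|) ^ 2 :=
        mul_nonneg hε0.le (sq_nonneg _)
      have h4Y : ε * (K₂ + c) ^ 2 * B ^ 2 ≤ K₁ * a * B ^ 2 :=
        mul_le_mul_of_nonneg_right hε4 (sq_nonneg _)
      have hβ1 : β ≤ ε * K₁ / 2 := min_le_left _ _
      have hβ2 : β ≤ a / 2 := min_le_right _ _
      have hA2 : |A| ^ 2 = A ^ 2 := sq_abs A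
      have hB2 : |B| ^ 2 = B ^ 2 := sq_abs B
      have h4Y' : ε * (K₂ + c) ^ 2 * |B| ^ 2 ≤ K₁ * a * |B| ^ 2 := by
        rw [hB2]; exact h4Y
      have hAM : ε * (K₂ + c) * (|A| * |B|) ≤ ε * K₁ / 2 * A ^ 2 + a / 2 * B ^ 2 := by
        have h2K : (0:ℝ) < 2 * K₁ := by positivity
        have hmain : 2 * K₁ * (ε * (K₂ + c) * (|A| * |B|))
            ≤ 2 * K₁ * (ε * K₁ / 2 * |A| ^ 2 + a / 2 * |B| ^ 2) := by
          nlinarith [hsq, h4Y']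
        have := (mul_le_mul_iff_right₀ h2K).mp hmain
        rw [hA2, hB2] at this
        exact this
      have hm1 := mul_le_mul_of_nonneg_left hAD hε0.le
      have hm2 := mul_le_mul_of_nonneg_left hAB.1 (mul_nonneg hε0.le hK₂.le)
      have hm3 := mul_le_mul_of_nonneg_right hεa (sq_nonneg B)
      have hm4 := mul_le_mul_of_nonneg_right hβ1 (sq_nonneg A)
      have hm5 := mul_le_mul_of_nonneg_right hβ2 (sq_nonneg B)
      nlinarith [hAM, hm1, hm2, hm3, hm4, hm5, hBD]
    -- step 2: α V t ≤ β (A² + B²)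
    have hVup : V t ≤ M * (A ^ 2 + B ^ 2) := by
      simp only [hV, hM]
      rw [← hA, ← hB]
      nlinarith [sq_nonneg (A + B), sq_nonneg (A - B), hε1, hε0.le, sq_nonneg A, sq_nonneg B]
    have h2 : α * V t ≤ β * (A ^ 2 + B ^ 2) := by
      have : α * V t ≤ α * (M * (A ^ 2 + B ^ 2)) :=
        mul_le_mul_of_nonneg_left hVup hα0.le
      have hαM : α * M = β := by rw [hα]; exact div_mul_cancel₀ β hM0.ne'
      nlinarith [this]
    linarith [hstep, h2]
  have hVlow : ∀ t : ℝ, K₁ / 2 * e₁ t ^ 2 + 1 / 2 * e₂ t ^ 2 ≤ V t := by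
    intro t
    simp only [hV]
    nlinarith [sq_nonneg (e₁ t + e₂ t), sq_nonneg (e₁ t - e₂ t), hε1, hεK, hε0.le,
      sq_nonneg (e₁ t), sq_nonneg (e₂ t)]
  have hVnn : ∀ t : ℝ, 0 ≤ V t := by
    intro t
    have h := hVlow t
    simp only [hV] at h ⊢
    nlinarith [mul_nonneg hK₁.le (sq_nonneg (e₁ t)), sq_nonneg (e₂ t)]
  -- the auxiliary function g t = V t * exp (α t) is antitone on [0,∞)
  set g : ℝ → ℝ := fun t => V t * Real.exp (α * t) with hg
  have hgd : ∀ t : ℝ, HasDerivAt g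
      (deriv V t * Real.exp (α * t) + V t * (Real.exp (α * t) * α)) t := by
    intro t
    have h1 : HasDerivAt (fun t : ℝ => Real.exp (α * t)) (Real.exp (α * t) * α) t := by
      simpa using ((hasDerivAt_id t).const_mul α).exp
    exact ((hVdiff t).hasDerivAt).mul h1
  have hganti : AntitoneOn g (Set.Ici (0:ℝ)) := by
    apply antitoneOn_of_deriv_nonpos (convex_Ici 0)
    · exact (hVdiff.continuous.mul (Real.continuous_exp.comp (continuous_const.mul
        continuous_id))).continuousOn
    · intro t _
      exact ((hgd t).differentiableAt).differentiableWithinAt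
    · intro t ht
      rw [interior_Ici] at ht
      rw [(hgd t).deriv]
      have hk := hkey t (le_of_lt ht)
      have hexp : 0 < Real.exp (α * t) := Real.exp_pos _
      nlinarith [mul_le_mul_of_nonneg_right hk hexp.le]
  -- exponential decay of V
  have hdecay : ∀ t : ℝ, 0 ≤ t → V t ≤ V 0 * Real.exp (-(α * t)) := by
    intro t ht
    have h := hganti (Set.self_mem_Ici) (Set.mem_Ici.mpr ht) ht
    simp only [hg, mul_zero, Real.exp_zero, mul_one] at h
    have hexp : 0 < Real.exp (α * t) := Real.exp_pos _
    rw [Real.exp_neg, ← div_eq_mul_inv, le_div_iff₀ hexp]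
    exact h
  -- the bound tends to 0
  have hU : Tendsto (fun t : ℝ => V 0 * Real.exp (-(α * t))) atTop (nhds 0) := by
    have h1 : Tendsto (fun t : ℝ => α * t) atTop atTop :=
      Tendsto.const_mul_atTop hα0 tendsto_id
    have h2 : Tendsto (fun t : ℝ => -(α * t)) atTop atBot :=
      tendsto_neg_atTop_atBot.comp h1
    have h3 : Tendsto (fun t : ℝ => Real.exp (-(α * t))) atTop (nhds 0) :=
      Real.tendsto_exp_atBot.comp h2
    simpa using h3.const_mul (V 0)
  -- squeeze for each component
  have htend : ∀ (e : ℝ → ℝ) (C : ℝ), 0 < C →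
      (∀ t : ℝ, 0 ≤ t → e t ^ 2 ≤ C * V t) → Tendsto e atTop (nhds 0) := by
    intro e C hC hle
    apply squeeze_zero_norm' (a := fun t => Real.sqrt (C * (V 0 * Real.exp (-(α * t)))))
    · filter_upwards [eventually_ge_atTop (0:ℝ)] with t ht
      have h1 : e t ^ 2 ≤ C * (V 0 * Real.exp (-(α * t))) := by
        calc e t ^ 2 ≤ C * V t := hle t ht
          _ ≤ C * (V 0 * Real.exp (-(α * t))) :=
            mul_le_mul_of_nonneg_left (hdecay t ht) hC.le
      have h2 : |e t| ≤ Real.sqrt (C * (V 0 * Real.exp (-(α * t)))) := by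
        calc |e t| = Real.sqrt (e t ^ 2) := (Real.sqrt_sq_eq_abs _).symm
          _ ≤ _ := Real.sqrt_le_sqrt h1
      simpa using h2
    · have h4 : Tendsto (fun t : ℝ => C * (V 0 * Real.exp (-(α * t)))) atTop (nhds 0) := by
        simpa using hU.const_mul C
      have h5 := (Real.continuous_sqrt.tendsto 0).comp h4
      simpa [Function.comp_def] using h5
  constructor
  · apply htend e₁ (2 / K₁) (by positivity)
    intro t ht
    have h := hVlow t
    simp only [hV] at h ⊢
    rw [div_mul_eq_mul_div, le_div_iff₀ hK₁]
    nlinarith [sq_nonneg (e₂ t)]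
  · apply htend e₂ 2 (by norm_num)
    intro t ht
    have h := hVlow t
    simp only [hV] at h ⊢
    nlinarith [mul_nonneg hK₁.le (sq_nonneg (e₁ t))]
end

section
/- Suppose σ : ℝ → ℝ is differentiable and satisfies σ'(s) · sign(σ(s)) ≤ -(M₀ - M̄) at every s ≥ 0 where σ(s) ≠ 0. Then there exists a reaching time t_r with 0 ≤ t_r ≤ |σ(0)| / (M₀ - M̄) such that σ(t_r) = 0. -/
private lemma smc_aux (c : ℝ) (hc : 0 < c) (σ : ℝ → ℝ) (hσ : Differentiable ℝ σ)
    (hd : ∀ s : ℝ, 0 ≤ s → σ s ≠ 0 → deriv σ s * Real.sign (σ s) ≤ -c)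
    (h0 : 0 < σ 0) :
    ∃ tr : ℝ, 0 ≤ tr ∧ tr ≤ σ 0 / c ∧ σ tr = 0 := by
  set T : ℝ := σ 0 / c with hT
  have hT0 : 0 ≤ T := div_nonneg h0.le hc.le
  by_contra h
  push_neg at h
  -- σ is positive on [0, T]
  have hpos : ∀ s ∈ Set.Icc (0:ℝ) T, 0 < σ s := by
    intro s hs
    rcases lt_trichotomy (σ s) 0 with hneg | hzero | hpos
    · -- IVT gives a zero between 0 and s
      have hcont : ContinuousOn σ (Set.Icc 0 s) := hσ.continuous.continuousOn
      have : (0:ℝ) ∈ Set.Icc (σ s) (σ 0) := ⟨hneg.le, h0.le⟩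
      obtain ⟨t, ht, htz⟩ := intermediate_value_Icc' hs.1 hcont this
      exact absurd htz (h t ht.1 (ht.2.trans hs.2))
    · exact absurd hzero (h s hs.1 hs.2)
    · exact hpos
  -- derivative bound on [0, T]
  have hderiv : ∀ s ∈ Set.Icc (0:ℝ) T, deriv σ s ≤ -c := by
    intro s hs
    have hp := hpos s hs
    have := hd s hs.1 hp.ne'
    rwa [Real.sign_of_pos hp, mul_one] at this
  -- g = σ + c·id is antitone on [0, T]
  set g : ℝ → ℝ := fun s => σ s + c * s with hg
  have hgd : Differentiable ℝ g := hσ.add (differentiable_const c |>.mul differentiable_id)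
  have hanti : AntitoneOn g (Set.Icc 0 T) := by
    apply antitoneOn_of_deriv_nonpos (convex_Icc 0 T) hgd.continuous.continuousOn
      (fun s _ => hgd.differentiableAt.differentiableWithinAt)
    intro s hs
    rw [interior_Icc] at hs
    have hD : HasDerivAt g (deriv σ s + c) s := by
      have h1 := (hσ s).hasDerivAt
      have h2 : HasDerivAt (fun y : ℝ => c * y) c s := by
        simpa using (hasDerivAt_id s).const_mul c
      exact h1.add h2
    rw [hD.deriv]
    have := hderiv s ⟨hs.1.le, hs.2.le⟩
    linarith
  have := hanti (Set.left_mem_Icc.mpr hT0) (Set.right_mem_Icc.mpr hT0) hT0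
  have hcT : c * T = σ 0 := by
    rw [hT]; field_simp
  have hTpos := hpos T (Set.right_mem_Icc.mpr hT0)
  simp only [hg, mul_zero, add_zero] at this
  linarith

/-- If `σ' s * sign (σ s) ≤ -(M₀ - M̄)` whenever `s ≥ 0` and `σ s ≠ 0`,
then there is a reaching time `t_r ∈ [0, |σ 0| / (M₀ - M̄)]` with `σ t_r = 0`. -/
theorem smc_finite_time_reaching
    (M₀ Mbar : ℝ) (hM₀ : 0 < M₀) (hMbar : 0 ≤ Mbar) (hlt : Mbar < M₀)
    (σ : ℝ → ℝ) (hσ : Differentiable ℝ σ)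
    (hdecr : ∀ s : ℝ, 0 ≤ s → σ s ≠ 0 → deriv σ s * Real.sign (σ s) ≤ -(M₀ - Mbar)) :
    ∃ tr : ℝ, 0 ≤ tr ∧ tr ≤ |σ 0| / (M₀ - Mbar) ∧ σ tr = 0 := by
  set c : ℝ := M₀ - Mbar with hcdef
  have hc : 0 < c := sub_pos.mpr hlt
  rcases lt_trichotomy (σ 0) 0 with hneg | hzero | hpos
  · -- apply the helper to -σ
    have hd : ∀ s : ℝ, 0 ≤ s → (-σ) s ≠ 0 → deriv (-σ) s * Real.sign ((-σ) s) ≤ -c := by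
      intro s hs hne
      have hne' : σ s ≠ 0 := by simpa using hne
      have := hdecr s hs hne'
      have hdn : deriv (-σ) s = -deriv σ s := by rw [Pi.neg_def, deriv.fun_neg]
      rw [hdn]
      simp only [Pi.neg_apply, Real.sign_neg, neg_mul_neg]
      exact this
    obtain ⟨tr, h1, h2, h3⟩ := smc_aux c hc (-σ) hσ.neg hd (by simpa using hneg)
    refine ⟨tr, h1, ?_, by simpa using h3⟩
    rw [abs_of_neg hneg]
    simpa using h2
  · exact ⟨0, le_refl 0, div_nonneg (abs_nonneg _) hc.le, hzero⟩
  · obtain ⟨tr, h1, h2, h3⟩ := smc_aux c hc σ hσ hdecr hpos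
    exact ⟨tr, h1, by rwa [abs_of_pos hpos], h3⟩
end

section
/- Let V : ℝ → ℝ be differentiable with V(t) ≥ 0 for all t ≥ 0, and suppose V'(t) ≤ -c · √(2 V(t)) for all t ≥ 0, where c > 0. Then V(t) = 0 for all t ≥ √(2 V(0)) / c. -/
/-! While `V > 0`, the chain rule gives `(√(2V))' = V' / √(2V) ≤ -c`, so `√(2 V s) + c s` is
nonincreasing. If `V` were still positive at `T = √(2 V 0) / c`, this would give
`√(2 V T) + √(2 V 0) ≤ √(2 V 0)`, forcing `V T = 0`; and `V`, being nonincreasing and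
nonnegative, then stays at `0` after `T`. -/

open Set

theorem HasDerivAt.sqrt_two_mul {V : ℝ → ℝ} {V' x : ℝ} (hV : HasDerivAt V V' x)
    (hx : 0 < V x) : HasDerivAt (fun s => √(2 * V s)) (V' / √(2 * V x)) x := by
  convert (hV.const_mul 2).sqrt (by positivity) using 1
  field_simp

theorem antitoneOn_sqrt_two_mul_add_mul {V : ℝ → ℝ} {c a b : ℝ} (hV : Differentiable ℝ V)
    (hVpos : ∀ s ∈ Icc a b, 0 < V s)
    (hdecr : ∀ s ∈ Ioo a b, deriv V s ≤ -c * √(2 * V s)) :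
    AntitoneOn (fun s => √(2 * V s) + c * s) (Icc a b) := by
  have hcont : Continuous fun s => √(2 * V s) + c * s := by
    have := hV.continuous
    fun_prop
  refine antitoneOn_of_hasDerivWithinAt_nonpos (convex_Icc a b) hcont.continuousOn
    (f' := fun s => deriv V s / √(2 * V s) + c) (fun s hs => ?_) (fun s hs => ?_)
  all_goals
    rw [interior_Icc] at hs
    have hVs := hVpos s (Ioo_subset_Icc_self hs)
  · exact (((hV s).hasDerivAt.sqrt_two_mul hVs).add (hasDerivAt_const_mul c)).hasDerivWithinAt
  · have hsqrt : 0 < √(2 * V s) := by positivity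
    have hslope : deriv V s / √(2 * V s) ≤ -c := by
      rw [div_le_iff₀ hsqrt]
      linarith [hdecr s hs]
    linarith

/-- Finite-time comparison lemma: if `V ≥ 0` is differentiable with
`V' t ≤ -c √(2 V t)` for all `t ≥ 0` and `c > 0`, then `V t = 0` for every
`t ≥ √(2 V 0) / c`. -/
theorem finite_time_comparison
    (c : ℝ) (hc : 0 < c)
    (V : ℝ → ℝ) (hV : Differentiable ℝ V)
    (hpos : ∀ t : ℝ, 0 ≤ t → 0 ≤ V t)
    (hdecr : ∀ t : ℝ, 0 ≤ t → deriv V t ≤ -c * Real.sqrt (2 * V t)) :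
    ∀ t : ℝ, Real.sqrt (2 * V 0) / c ≤ t → V t = 0 := by
  intro t ht
  set T := √(2 * V 0) / c
  have hT : 0 ≤ T := by positivity
  have hanti : AntitoneOn V (Ici 0) := by
    refine antitoneOn_of_deriv_nonpos (convex_Ici 0) hV.continuous.continuousOn
      hV.differentiableOn fun s hs => ?_
    rw [interior_Ici] at hs
    have := hdecr s hs.le
    have : 0 ≤ c * √(2 * V s) := by positivity
    linarith
  have hVT : V T = 0 := by
    by_contra hne
    have hVT_pos : 0 < V T := (hpos T hT).lt_of_ne' hne
    have hVpos : ∀ s ∈ Icc 0 T, 0 < V s := fun s hs =>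
      hVT_pos.trans_le (hanti hs.1 (mem_Ici.2 hT) hs.2)
    have hW := antitoneOn_sqrt_two_mul_add_mul hV hVpos (fun s hs => hdecr s hs.1.le)
      (left_mem_Icc.2 hT) (right_mem_Icc.2 hT) hT
    have hcT : c * T = √(2 * V 0) := mul_div_cancel₀ _ hc.ne'
    have : 0 < √(2 * V T) := by positivity
    simp only [mul_zero, add_zero] at hW
    linarith
  exact le_antisymm (hVT ▸ hanti (mem_Ici.2 hT) (mem_Ici.2 (hT.trans ht)) ht)
    (hpos t (hT.trans ht))
end

section
/- For the RLC circuit with twice-differentiable signals, the tangent-space stored energy E_t(t) = (1/2) L i'(t)² + (1/2) C v'(t)² satisfies the tangent-space energy balance E_t'(t) = -R i'(t)² + u'(t) i'(t) + v'(t) · (d/dt)(-P(t)/v(t)) for all t, i.e., E_t' equals minus twice the tangent-space dissipation D_t = (1/2) R i'², plus the tangent-space control power P_t^u = u' i', plus the tangent-space port power P_t^r = (d/dt)(-P/v) · v'. -/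
/-!
Differentiating both circuit equations once gives the tangent dynamics
`L i'' = -R i' - v' + u'` and `C v'' = i' + (-P/v)'`. Since `E_t' = L i' i'' + C v' v''`,
substituting them makes the coupling terms `∓ i' v'` cancel, leaving the balance.
-/

section Calculus

variable {𝕜 : Type*} [NontriviallyNormedField 𝕜]

theorem HasDerivAt.const_mul_eq_of_forall_eq {f g : 𝕜 → 𝕜} {f' g' c x : 𝕜}
    (hf : HasDerivAt f f' x) (hg : HasDerivAt g g' x) (h : ∀ s, c * f s = g s) :
    c * f' = g' :=
  (funext h ▸ hf.const_mul c : HasDerivAt g (c * f') x).unique hg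

theorem HasDerivAt.half_mul_sq [CharZero 𝕜] {f : 𝕜 → 𝕜} {f' x : 𝕜} (a : 𝕜)
    (hf : HasDerivAt f f' x) :
    HasDerivAt (fun s => 1 / 2 * a * f s ^ 2) (a * f x * f') x :=
  ((hf.fun_pow 2).const_mul (1 / 2 * a)).congr_deriv (by push_cast; ring)

end Calculus

theorem rlc_inductor_tangent {R L : ℝ} {i v u : ℝ → ℝ} {t : ℝ}
    (hi : DifferentiableAt ℝ i t) (hi' : DifferentiableAt ℝ (deriv i) t)
    (hv : DifferentiableAt ℝ v t) (hu : DifferentiableAt ℝ u t)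
    (hdyn : ∀ s : ℝ, L * deriv i s = -R * i s - v s + u s) :
    L * deriv (deriv i) t = -R * deriv i t - deriv v t + deriv u t :=
  hi'.hasDerivAt.const_mul_eq_of_forall_eq
    (((hi.hasDerivAt.const_mul (-R)).sub hv.hasDerivAt).add hu.hasDerivAt) hdyn

theorem rlc_capacitor_tangent {C : ℝ} {i v P : ℝ → ℝ} {t : ℝ}
    (hi : DifferentiableAt ℝ i t) (hv : DifferentiableAt ℝ v t)
    (hv' : DifferentiableAt ℝ (deriv v) t) (hP : DifferentiableAt ℝ P t) (hvt : v t ≠ 0)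
    (hdyn : ∀ s : ℝ, C * deriv v s = i s - P s / v s) :
    C * deriv (deriv v) t = deriv i t + deriv (fun s => -P s / v s) t := by
  have hport : HasDerivAt (fun s => -P s / v s) (deriv (fun s => -P s / v s) t) t :=
    (hP.neg.div hv hvt).hasDerivAt
  refine hv'.hasDerivAt.const_mul_eq_of_forall_eq (hi.hasDerivAt.add hport) fun s => ?_
  rw [Pi.add_apply, hdyn, neg_div, sub_eq_add_neg]

theorem rlc_tangent_energy_balance_general
    (R L C : ℝ)
    (i v u P : ℝ → ℝ)
    (hi : Differentiable ℝ i) (hi' : Differentiable ℝ (deriv i))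
    (hv : Differentiable ℝ v) (hv' : Differentiable ℝ (deriv v))
    (hu : Differentiable ℝ u)
    (hP : Differentiable ℝ P)
    (hvne : ∀ t : ℝ, v t ≠ 0)
    (hdyn₁ : ∀ t : ℝ, L * deriv i t = -R * i t - v t + u t)
    (hdyn₂ : ∀ t : ℝ, C * deriv v t = i t - P t / v t)
    (Et : ℝ → ℝ)
    (hEt : ∀ t : ℝ, Et t = (1/2) * L * (deriv i t)^2 + (1/2) * C * (deriv v t)^2) :
    ∀ t : ℝ, HasDerivAt Et
      (-R * (deriv i t)^2 + deriv u t * deriv i t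
        + deriv v t * deriv (fun s => -P s / v s) t) t := by
  intro t
  have hE : HasDerivAt Et (L * deriv i t * deriv (deriv i) t
      + C * deriv v t * deriv (deriv v) t) t :=
    funext hEt ▸ ((hi' t).hasDerivAt.half_mul_sq L).add ((hv' t).hasDerivAt.half_mul_sq C)
  have hind := rlc_inductor_tangent (hi t) (hi' t) (hv t) (hu t) hdyn₁
  have hcap := rlc_capacitor_tangent (hi t) (hv t) (hv' t) (hP t) (hvne t) hdyn₂
  convert hE using 1
  linear_combination (-deriv i t) * hind + (-deriv v t) * hcap

/-- For the series RLC circuit with twice-differentiable signals,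
the tangent-space stored energy `E_t t = (1/2) L (i' t)^2 + (1/2) C (v' t)^2`
satisfies `E_t' t = -R (i' t)^2 + u' t * i' t + v' t * (d/dt)(-P/v) t`. -/
theorem rlc_tangent_energy_balance
    (R L C : ℝ) (hR : 0 < R) (hL : 0 < L) (hC : 0 < C)
    (i v u P : ℝ → ℝ)
    (hi : Differentiable ℝ i) (hi' : Differentiable ℝ (deriv i))
    (hv : Differentiable ℝ v) (hv' : Differentiable ℝ (deriv v))
    (hu : Differentiable ℝ u) (hu' : Differentiable ℝ (deriv u))
    (hP : Differentiable ℝ P) (hP' : Differentiable ℝ (deriv P))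
    (hvne : ∀ t : ℝ, v t ≠ 0)
    (hdyn₁ : ∀ t : ℝ, L * deriv i t = -R * i t - v t + u t)
    (hdyn₂ : ∀ t : ℝ, C * deriv v t = i t - P t / v t)
    (Et : ℝ → ℝ)
    (hEt : ∀ t : ℝ, Et t = (1/2) * L * (deriv i t)^2 + (1/2) * C * (deriv v t)^2) :
    ∀ t : ℝ, HasDerivAt Et
      (-R * (deriv i t)^2 + deriv u t * deriv i t
        + deriv v t * deriv (fun s => -P s / v s) t) t :=
  rlc_tangent_energy_balance_general R L C i v u P hi hi' hv hv' hu hP hvne hdyn₁ hdyn₂ Et hEt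
end

section
/- For the RLC circuit with twice-differentiable signals, define the stored energy E = (1/2) L i² + (1/2) C v², its derivative p = E', the tangent-space energy E_t = (1/2) L (i')² + (1/2) C (v')², the capacitor reactive power rate Q̇_C = C v v'' - C (v')², the control reactive power rate Q̇^u = u i' - i u', and the port reactive power rate Q̇^r = v · (d/dt)(-P/v) - (-P/v) · v'. Then the second-order energy-space identity p'(t) = 4 E_t(t) + 2 Q̇_C(t) - Q̇^u(t) - Q̇^r(t) holds for all t. -/
/-! Since `p = L i i' + C v v'`, its derivative `p'` involves `i''` and `v''`. The differentiated
inductor equation `L i'' = -R i' - v' + u'` eliminates `i''`; the capacitor equation identifies the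
load current `-P/v` with `C v' - i`, so `Q̇ʳ` only involves `i, i', v, v', v''`. What remains is a
polynomial identity modulo the inductor equation. -/

theorem HasDerivAt.half_const_mul_sq {f : ℝ → ℝ} {f' t : ℝ} (a : ℝ) (hf : HasDerivAt f f' t) :
    HasDerivAt (fun s => 1 / 2 * a * f s ^ 2) (a * (f t * f')) t :=
  ((hf.fun_pow 2).const_mul (1 / 2 * a)).congr_deriv (by norm_num; ring)

theorem deriv_storage_energy (L C : ℝ) {i v : ℝ → ℝ} (hi : Differentiable ℝ i)
    (hv : Differentiable ℝ v) :
    deriv (fun s => 1 / 2 * L * i s ^ 2 + 1 / 2 * C * v s ^ 2) =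
      fun s => L * (i s * deriv i s) + C * (v s * deriv v s) :=
  funext fun s =>
    ((hi s).hasDerivAt.half_const_mul_sq L |>.add ((hv s).hasDerivAt.half_const_mul_sq C)).deriv

theorem const_mul_deriv_deriv_eq {f g : ℝ → ℝ} {a g' t : ℝ} (h : ∀ s, a * deriv f s = g s)
    (hf : DifferentiableAt ℝ (deriv f) t) (hg : HasDerivAt g g' t) :
    a * deriv (deriv f) t = g' := by
  have hfg : (fun s => a * deriv f s) = g := funext h
  exact (hfg ▸ hf.hasDerivAt.const_mul a).unique hg

theorem rlc_second_order_energy_identity_general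
    (R L C : ℝ)
    (i v u P : ℝ → ℝ)
    (hi : Differentiable ℝ i) (hi' : Differentiable ℝ (deriv i))
    (hv : Differentiable ℝ v) (hv' : Differentiable ℝ (deriv v))
    (hu : Differentiable ℝ u)
    (hdyn₁ : ∀ t : ℝ, L * deriv i t = -R * i t - v t + u t)
    (hdyn₂ : ∀ t : ℝ, C * deriv v t = i t - P t / v t)
    (E p Et QdC Qdu Qdr : ℝ → ℝ)
    (hE : ∀ t : ℝ, E t = (1/2) * L * (i t)^2 + (1/2) * C * (v t)^2)
    (hp : ∀ t : ℝ, p t = deriv E t)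
    (hEt : ∀ t : ℝ, Et t = (1/2) * L * (deriv i t)^2 + (1/2) * C * (deriv v t)^2)
    (hQdC : ∀ t : ℝ, QdC t = C * v t * deriv (deriv v) t - C * (deriv v t)^2)
    (hQdu : ∀ t : ℝ, Qdu t = u t * deriv i t - i t * deriv u t)
    (hQdr : ∀ t : ℝ,
      Qdr t = v t * deriv (fun s => -P s / v s) t - (-P t / v t) * deriv v t) :
    ∀ t : ℝ, deriv p t = 4 * Et t + 2 * QdC t - Qdu t - Qdr t := by
  intro t
  have hp_eq : p = fun s => L * (i s * deriv i s) + C * (v s * deriv v s) := by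
    rw [funext hp, funext hE, deriv_storage_energy L C hi hv]
  have hp_deriv : deriv p t = L * (deriv i t * deriv i t + i t * deriv (deriv i) t)
      + C * (deriv v t * deriv v t + v t * deriv (deriv v) t) := by
    rw [hp_eq]
    exact ((((hi t).hasDerivAt.mul (hi' t).hasDerivAt).const_mul L).add
      (((hv t).hasDerivAt.mul (hv' t).hasDerivAt).const_mul C)).deriv
  have hdyn₁' : L * deriv (deriv i) t = -R * deriv i t - deriv v t + deriv u t :=
    const_mul_deriv_deriv_eq hdyn₁ (hi' t)
      ((((hi t).hasDerivAt.const_mul (-R)).sub (hv t).hasDerivAt).add (hu t).hasDerivAt)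
  have hload : (fun s => -P s / v s) = fun s => C * deriv v s - i s := by
    funext s
    linarith [hdyn₂ s, neg_div (v s) (P s)]
  have hload_deriv : deriv (fun s => -P s / v s) t = C * deriv (deriv v) t - deriv i t := by
    rw [hload]
    exact (((hv' t).hasDerivAt.const_mul C).sub (hi t).hasDerivAt).deriv
  rw [hp_deriv, hEt, hQdC, hQdu, hQdr, hload_deriv, congrFun hload t]
  linear_combination (-deriv i t) * hdyn₁ t + i t * hdyn₁'

/-- For the series RLC circuit with twice-differentiable signals,
the second-order energy-space identity `p' = 4 E_t + 2 Q̇_C - Q̇ᵘ - Q̇ʳ` holds,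
where `E = (1/2) L i² + (1/2) C v²`, `p = E'`,
`E_t = (1/2) L (i')² + (1/2) C (v')²`, `Q̇_C = C v v'' - C (v')²`,
`Q̇ᵘ = u i' - i u'`, and `Q̇ʳ = v (-P/v)' - (-P/v) v'`. -/
theorem rlc_second_order_energy_identity
    (R L C : ℝ) (hR : 0 < R) (hL : 0 < L) (hC : 0 < C)
    (i v u P : ℝ → ℝ)
    (hi : Differentiable ℝ i) (hi' : Differentiable ℝ (deriv i))
    (hv : Differentiable ℝ v) (hv' : Differentiable ℝ (deriv v))
    (hu : Differentiable ℝ u) (hu' : Differentiable ℝ (deriv u))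
    (hP : Differentiable ℝ P) (hP' : Differentiable ℝ (deriv P))
    (hvne : ∀ t : ℝ, v t ≠ 0)
    (hdyn₁ : ∀ t : ℝ, L * deriv i t = -R * i t - v t + u t)
    (hdyn₂ : ∀ t : ℝ, C * deriv v t = i t - P t / v t)
    (E p Et QdC Qdu Qdr : ℝ → ℝ)
    (hE : ∀ t : ℝ, E t = (1/2) * L * (i t)^2 + (1/2) * C * (v t)^2)
    (hp : ∀ t : ℝ, p t = deriv E t)
    (hEt : ∀ t : ℝ, Et t = (1/2) * L * (deriv i t)^2 + (1/2) * C * (deriv v t)^2)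
    (hQdC : ∀ t : ℝ, QdC t = C * v t * deriv (deriv v) t - C * (deriv v t)^2)
    (hQdu : ∀ t : ℝ, Qdu t = u t * deriv i t - i t * deriv u t)
    (hQdr : ∀ t : ℝ,
      Qdr t = v t * deriv (fun s => -P s / v s) t - (-P t / v t) * deriv v t) :
    ∀ t : ℝ, deriv p t = 4 * Et t + 2 * QdC t - Qdu t - Qdr t :=
  rlc_second_order_energy_identity_general R L C i v u P hi hi' hv hv' hu hdyn₁ hdyn₂ E p Et QdC Qdu
    Qdr hE hp hEt hQdC hQdu hQdr
end

section
/- For the synchronous generator with twice-differentiable signals, define the stored energy E = (1/2) J ω², its derivative p = E', the tangent-space energy E_t = (1/2) J (ω')², the control reactive power rate Q̇^u = (P_m/ω) ω' - ω · (d/dt)(P_m/ω), and the port reactive power rate Q̇^r = (-P/ω) ω' - ω · (d/dt)(-P/ω). Then the second-order energy-space identity p'(t) = 4 E_t(t) - Q̇^u(t) - Q̇^r(t) holds for all t. -/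
/-!
Write `u = (P_m - P)/ω`, so that `Q̇ᵘ + Q̇ʳ = u ω' - ω u'`. The swing equation says
`u = J ω' + D ω`; substituting, the damping terms cancel and `Q̇ᵘ + Q̇ʳ = J ω'² - J ω ω''`.
On the other side `p = J ω ω'`, so `p' = J ω'² + J ω ω'' = 2 J ω'² - (Q̇ᵘ + Q̇ʳ)`.
-/

noncomputable section

/-- The paper's reactive power rate `Q̇` of a port with power `x`: `Q̇ᵘ` for `x = P_m`, `Q̇ʳ` for `x = -P`. -/
def reactiveRate (x ω : ℝ → ℝ) (t : ℝ) : ℝ :=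
  x t / ω t * deriv ω t - ω t * deriv (fun s => x s / ω s) t

theorem reactiveRate_add {x y ω : ℝ → ℝ} {t : ℝ} (hx : DifferentiableAt ℝ x t)
    (hy : DifferentiableAt ℝ y t) (hω : DifferentiableAt ℝ ω t) (hωt : ω t ≠ 0) :
    reactiveRate (fun s => x s + y s) ω t = reactiveRate x ω t + reactiveRate y ω t := by
  have hsplit : (fun s => (x s + y s) / ω s) = fun s => x s / ω s + y s / ω s := by
    funext s; exact add_div _ _ _
  have h : HasDerivAt (fun s => x s / ω s + y s / ω s)
      (deriv (fun s => x s / ω s) t + deriv (fun s => y s / ω s) t) t :=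
    (hx.div hω hωt).hasDerivAt.add (hy.div hω hωt).hasDerivAt
  unfold reactiveRate
  rw [hsplit, h.deriv, add_div]
  ring

theorem reactiveRate_of_swing {J D : ℝ} {x ω : ℝ → ℝ} {t : ℝ} (hω : DifferentiableAt ℝ ω t)
    (hω' : DifferentiableAt ℝ (deriv ω) t)
    (hdyn : ∀ s, J * deriv ω s = -D * ω s + x s / ω s) :
    reactiveRate x ω t = J * deriv ω t ^ 2 - J * ω t * deriv (deriv ω) t := by
  have hu : (fun s => x s / ω s) = fun s => J * deriv ω s + D * ω s := by
    funext s; linarith [hdyn s]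
  have hu' : HasDerivAt (fun s => J * deriv ω s + D * ω s)
      (J * deriv (deriv ω) t + D * deriv ω t) t :=
    (hω'.hasDerivAt.const_mul J).add (hω.hasDerivAt.const_mul D)
  unfold reactiveRate
  rw [congrFun hu t, hu, hu'.deriv]
  ring

theorem deriv_half_mul_sq {J : ℝ} {ω : ℝ → ℝ} (hω : Differentiable ℝ ω) :
    deriv (fun s => 1 / 2 * J * ω s ^ 2) = fun s => J * ω s * deriv ω s := by
  funext s
  have h : HasDerivAt (fun s => 1 / 2 * J * ω s ^ 2) (1 / 2 * J * (2 * ω s * deriv ω s)) s := by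
    simpa using ((hω s).hasDerivAt.pow 2).const_mul (1 / 2 * J)
  rw [h.deriv]
  ring

theorem deriv_deriv_half_mul_sq {J : ℝ} {ω : ℝ → ℝ} {t : ℝ} (hω : Differentiable ℝ ω)
    (hω' : DifferentiableAt ℝ (deriv ω) t) :
    deriv (deriv fun s => 1 / 2 * J * ω s ^ 2) t
      = J * deriv ω t ^ 2 + J * ω t * deriv (deriv ω) t := by
  have h : HasDerivAt (fun s => J * ω s * deriv ω s)
      (J * deriv ω t * deriv ω t + J * ω t * deriv (deriv ω) t) t :=
    ((hω t).hasDerivAt.const_mul J).mul hω'.hasDerivAt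
  rw [deriv_half_mul_sq hω, h.deriv]
  ring

end

theorem generator_second_order_energy_identity_general
    (J D : ℝ)
    (ω Pm P : ℝ → ℝ)
    (hω : Differentiable ℝ ω) (hω' : Differentiable ℝ (deriv ω))
    (hPm : Differentiable ℝ Pm)
    (hP : Differentiable ℝ P)
    (hωpos : ∀ t : ℝ, 0 < ω t)
    (hdyn : ∀ t : ℝ, J * deriv ω t = -D * ω t + (Pm t - P t) / ω t)
    (E p Et Qdu Qdr : ℝ → ℝ)
    (hE : ∀ t : ℝ, E t = (1/2) * J * (ω t)^2)
    (hp : ∀ t : ℝ, p t = deriv E t)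
    (hEt : ∀ t : ℝ, Et t = (1/2) * J * (deriv ω t)^2)
    (hQdu : ∀ t : ℝ,
      Qdu t = (Pm t / ω t) * deriv ω t - ω t * deriv (fun s => Pm s / ω s) t)
    (hQdr : ∀ t : ℝ,
      Qdr t = (-P t / ω t) * deriv ω t - ω t * deriv (fun s => -P s / ω s) t) :
    ∀ t : ℝ, deriv p t = 4 * Et t - Qdu t - Qdr t := by
  intro t
  have hpp : deriv p t = J * deriv ω t ^ 2 + J * ω t * deriv (deriv ω) t := by
    rw [funext hp, funext hE, deriv_deriv_half_mul_sq hω (hω' t)]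
  have hQ : Qdu t + Qdr t = J * deriv ω t ^ 2 - J * ω t * deriv (deriv ω) t := by
    have hsum : Qdu t + Qdr t = reactiveRate (fun s => Pm s + -P s) ω t := by
      rw [reactiveRate_add (y := fun s => -P s) (hPm t) (hP t).neg (hω t) (hωpos t).ne', hQdu, hQdr]
      rfl
    rw [hsum]
    exact reactiveRate_of_swing (hω t) (hω' t) fun s => by rw [hdyn s, sub_eq_add_neg]
  rw [hpp, hEt]
  linear_combination hQ

/-- For the synchronous generator with twice-differentiable signals,
the second-order energy-space identity `p' = 4 E_t - Q̇ᵘ - Q̇ʳ` holds, where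
`E = (1/2) J ω²`, `p = E'`, `E_t = (1/2) J (ω')²`,
`Q̇ᵘ = (P_m/ω) ω' - ω (P_m/ω)'`, and `Q̇ʳ = (-P/ω) ω' - ω (-P/ω)'`. -/
theorem generator_second_order_energy_identity
    (J D : ℝ) (hJ : 0 < J) (hD : 0 ≤ D)
    (ω Pm P : ℝ → ℝ)
    (hω : Differentiable ℝ ω) (hω' : Differentiable ℝ (deriv ω))
    (hPm : Differentiable ℝ Pm) (hPm' : Differentiable ℝ (deriv Pm))
    (hP : Differentiable ℝ P) (hP' : Differentiable ℝ (deriv P))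
    (hωpos : ∀ t : ℝ, 0 < ω t)
    (hdyn : ∀ t : ℝ, J * deriv ω t = -D * ω t + (Pm t - P t) / ω t)
    (E p Et Qdu Qdr : ℝ → ℝ)
    (hE : ∀ t : ℝ, E t = (1/2) * J * (ω t)^2)
    (hp : ∀ t : ℝ, p t = deriv E t)
    (hEt : ∀ t : ℝ, Et t = (1/2) * J * (deriv ω t)^2)
    (hQdu : ∀ t : ℝ,
      Qdu t = (Pm t / ω t) * deriv ω t - ω t * deriv (fun s => Pm s / ω s) t)
    (hQdr : ∀ t : ℝ,
      Qdr t = (-P t / ω t) * deriv ω t - ω t * deriv (fun s => -P s / ω s) t) :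
    ∀ t : ℝ, deriv p t = 4 * Et t - Qdu t - Qdr t :=
  generator_second_order_energy_identity_general J D ω Pm P hω hω' hPm hP hωpos hdyn E p Et Qdu Qdr
    hE hp hEt hQdu hQdr
end

section
/- For the synchronous generator, the energy-space-to-physical control mapping is exact: if the turbine dynamics T_t P_m'(t) = K_t a(t) - P_m(t) hold and the valve position is chosen as a(t) = (T_t (2 ω'(t) P_m(t)/ω(t) - u_z(t)) + P_m(t)) / K_t, then the realized control reactive power rate satisfies 2 (P_m(t)/ω(t)) ω'(t) - P_m'(t) = u_z(t) for all t, i.e., Q̇^u = (P_m/ω) ω' - ω · (d/dt)(P_m/ω) equals the energy-space primary control input u_z. -/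
/-!
The valve law is the turbine law solved for `a` with `P_m'` replaced by the target rate
`2 ω' P_m / ω - u_z`; since `K_t, T_t ≠ 0` the turbine then realizes exactly that rate.
The second form of the identity follows from the quotient rule,
`ω (P_m / ω)' = P_m' - (P_m / ω) ω'`.
-/

lemma eq_of_first_order_lag_of_input_eq {K T r P y a : ℝ} (hK : K ≠ 0) (hT : T ≠ 0)
    (hlag : T * r = K * a - P) (hinput : a = (T * y + P) / K) : r = y := by
  rw [hinput, mul_div_cancel₀ _ hK] at hlag
  exact mul_left_cancel₀ hT (by linarith)

lemma mul_deriv_div_self {f g : ℝ → ℝ} {x : ℝ} (hf : DifferentiableAt ℝ f x)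
    (hg : DifferentiableAt ℝ g x) (hx : g x ≠ 0) :
    g x * deriv (fun s => f s / g s) x = deriv f x - f x / g x * deriv g x := by
  rw [show deriv (fun s => f s / g s) x = _ from deriv_div hf hg hx]
  field_simp

/-- For the synchronous generator, the energy-space-to-physical
control mapping is exact: if the turbine dynamics hold and the valve position is
chosen by the stated formula, then the realized control reactive power rate
equals the energy-space primary control input `u_z`. -/
theorem generator_control_mapping_exact
    (Kt Tt : ℝ) (hKt : 0 < Kt) (hTt : 0 < Tt)
    (ω Pm a uz : ℝ → ℝ)
    (hω : Differentiable ℝ ω) (hPm : Differentiable ℝ Pm)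
    (hωpos : ∀ t : ℝ, 0 < ω t)
    (hturb : ∀ t : ℝ, Tt * deriv Pm t = Kt * a t - Pm t)
    (hvalve : ∀ t : ℝ,
      a t = (Tt * (2 * deriv ω t * Pm t / ω t - uz t) + Pm t) / Kt) :
    ∀ t : ℝ,
      2 * (Pm t / ω t) * deriv ω t - deriv Pm t = uz t ∧
      (Pm t / ω t) * deriv ω t - ω t * deriv (fun s => Pm s / ω s) t = uz t := by
  intro t
  have hrate : deriv Pm t = 2 * deriv ω t * Pm t / ω t - uz t :=
    eq_of_first_order_lag_of_input_eq hKt.ne' hTt.ne' (hturb t) (hvalve t)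
  have hexact : 2 * (Pm t / ω t) * deriv ω t - deriv Pm t = uz t := by
    rw [hrate]
    ring
  refine ⟨hexact, ?_⟩
  rw [mul_deriv_div_self (hPm t) (hω t) (hωpos t).ne']
  linarith
end
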